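/- Let n, k be positive integers and γ ∈ (0, 1/5] be such that a := γ·k is an integer and k ≤ γ·n/(2γ + 1). Let A, B, C be a partition of [n] with |A| = a, |B| = k − a, |C| = n − k, let v ≥ 0 be a real number, and let x̂ ∈ ℂ^n satisfy |x̂_i| = (2/k)·(n − k)·v for every i ∈ A and |x̂_i| = v for every i ∈ B ∪ C. Then ‖x̂_{−k}‖₁ = (n − k)·v and ‖x̂‖₂² ≤ (5γ/k)·‖x̂_{−k}‖₁² ≤ (1/k)·‖x̂_{−k}‖₁². In particular, the zero vector satisfies the ℓ2/ℓ1 guarantee ‖0 − x̂‖₂ ≤ (1/√k)·‖x̂_{−k}‖₁ for such signals, although all a = γk coordinates in A have magnitude twice the noise level (2/k)·‖x̂_{−k}‖₁. -/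

import Mathlib

open Finset

/-- `‖y_{-k}‖₁`: the minimum over sets `T` of size `k` of the ℓ1 norm of `y` outside `T`. -/
noncomputable def tailNorm (n k : ℕ) (y : Fin n → ℂ) : ℝ :=
  sInf ((fun T : Finset (Fin n) => ∑ i ∈ Tᶜ, ‖y i‖) ''
    {T : Finset (Fin n) | T.card = k})

set_option maxHeartbeats 1600000 in
/-- The separating example between the `ℓ2/ℓ1` and `ℓ∞/ℓ1` guarantees: for the signal with
`γk` coordinates of magnitude `(2/k)(n-k)v` and all remaining coordinates of magnitude `v`,
the tail norm equals `(n-k)v`, and `‖x̂‖₂² ≤ (5γ/k)‖x̂_{-k}‖₁² ≤ (1/k)‖x̂_{-k}‖₁²`; in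
particular the zero vector satisfies the `ℓ2/ℓ1` guarantee. -/
theorem ell2_ell1_separating_example (n k : ℕ) (hn : 0 < n) (hk : 0 < k)
    (γ : ℝ) (hγ0 : 0 < γ) (hγ5 : γ ≤ 1 / 5)
    (a : ℕ) (ha : (a : ℝ) = γ * k)
    (hkn : (k : ℝ) ≤ γ * n / (2 * γ + 1))
    (A B C : Finset (Fin n)) (hAB : Disjoint A B) (hAC : Disjoint A C) (hBC : Disjoint B C)
    (hcover : A ∪ B ∪ C = Finset.univ)
    (hcardA : A.card = a) (hcardB : B.card = k - a) (hcardC : C.card = n - k)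
    (v : ℝ) (hv : 0 ≤ v) (xh : Fin n → ℂ)
    (hA : ∀ i ∈ A, ‖xh i‖ = 2 / k * (((n : ℝ) - k) * v))
    (hBCval : ∀ i ∈ B ∪ C, ‖xh i‖ = v) :
    tailNorm n k xh = ((n : ℝ) - k) * v ∧
    ∑ i : Fin n, ‖xh i‖ ^ 2 ≤ 5 * γ / k * (((n : ℝ) - k) * v) ^ 2 ∧
    5 * γ / k * (((n : ℝ) - k) * v) ^ 2 ≤ 1 / k * (((n : ℝ) - k) * v) ^ 2 ∧
    Real.sqrt (∑ i : Fin n, ‖xh i‖ ^ 2) ≤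
      1 / Real.sqrt k * tailNorm n k xh := by
  have hK : (0 : ℝ) < k := by exact_mod_cast hk
  -- basic inequalities
  have hkn' : (k : ℝ) * (2 * γ + 1) ≤ γ * n := by
    rw [le_div_iff₀ (by linarith)] at hkn; exact hkn
  have h2k : 2 * (k : ℝ) < n := by
    by_contra h
    push_neg at h
    have : γ * n ≤ γ * (2 * k) := by
      apply mul_le_mul_of_nonneg_left h hγ0.le
    nlinarith
  have hknR : (k : ℝ) ≤ n := by linarith
  have hknN : k ≤ n := by exact_mod_cast hknR
  have haR : (a : ℝ) ≤ k := by rw [ha]; nlinarith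
  have hakN : a ≤ k := by exact_mod_cast haR
  have hMnn : (0 : ℝ) ≤ ((n : ℝ) - k) * v := by
    apply mul_nonneg (by linarith) hv
  -- pointwise lower bound
  have hge : ∀ i : Fin n, v ≤ ‖xh i‖ := by
    intro i
    have hi : i ∈ A ∪ B ∪ C := hcover ▸ Finset.mem_univ i
    rcases Finset.mem_union.mp hi with hi' | hiC
    · rcases Finset.mem_union.mp hi' with hiA | hiB
      · rw [hA i hiA, div_mul_eq_mul_div, le_div_iff₀ hK]
        nlinarith
      · rw [hBCval i (Finset.mem_union_left _ hiB)]
    · rw [hBCval i (Finset.mem_union_right _ hiC)]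
  -- the defining set for the tail norm
  set S := ((fun T : Finset (Fin n) => ∑ i ∈ Tᶜ, ‖xh i‖) ''
    {T : Finset (Fin n) | T.card = k}) with hS
  -- complement of A ∪ B equals C
  have hABc : (A ∪ B)ᶜ = C := by
    ext i
    simp only [Finset.mem_compl, Finset.mem_union, not_or]
    constructor
    · rintro ⟨hiA, hiB⟩
      have hi : i ∈ A ∪ B ∪ C := hcover ▸ Finset.mem_univ i
      simp only [Finset.mem_union] at hi
      tauto
    · intro hiC
      exact ⟨Finset.disjoint_right.mp hAC hiC, Finset.disjoint_right.mp hBC hiC⟩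
  have hcardAB : (A ∪ B).card = k := by
    rw [Finset.card_union_of_disjoint hAB, hcardA, hcardB]
    omega
  have hCcast : ((C.card : ℝ)) = (n : ℝ) - k := by
    rw [hcardC]
    push_cast [hknN]
    ring
  have hmem : ((n : ℝ) - k) * v ∈ S := by
    refine ⟨A ∪ B, hcardAB, ?_⟩
    show (∑ i ∈ (A ∪ B)ᶜ, ‖xh i‖) = ((n : ℝ) - k) * v
    rw [hABc]
    rw [Finset.sum_congr rfl (fun i hi => hBCval i (Finset.mem_union_right _ hi)),
      Finset.sum_const, nsmul_eq_mul, hCcast]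
  have hlb : ∀ r ∈ S, ((n : ℝ) - k) * v ≤ r := by
    rintro r ⟨T, hT, rfl⟩
    simp only [Set.mem_setOf_eq] at hT
    have hcard : ((Tᶜ.card : ℝ)) = (n : ℝ) - k := by
      rw [Finset.card_compl, hT, Fintype.card_fin]
      push_cast [hknN]
      ring
    calc ((n : ℝ) - k) * v = ∑ _i ∈ Tᶜ, v := by
          rw [Finset.sum_const, nsmul_eq_mul, hcard]
      _ ≤ ∑ i ∈ Tᶜ, ‖xh i‖ := Finset.sum_le_sum (fun i _ => hge i)
  have htail : tailNorm n k xh = ((n : ℝ) - k) * v := by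
    unfold tailNorm
    exact le_antisymm (csInf_le ⟨_, hlb⟩ hmem) (le_csInf ⟨_, hmem⟩ hlb)
  -- ℓ2 sum computation
  have hdisjABC : Disjoint (A ∪ B) C := Finset.disjoint_union_left.mpr ⟨hAC, hBC⟩
  have hsum : ∑ i : Fin n, ‖xh i‖ ^ 2
      = (a : ℝ) * (2 / k * (((n : ℝ) - k) * v)) ^ 2 + ((k : ℝ) - a) * v ^ 2
        + ((n : ℝ) - k) * v ^ 2 := by
    rw [← hcover, Finset.sum_union hdisjABC, Finset.sum_union hAB]
    congr 1
    · congr 1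
      · rw [Finset.sum_congr rfl (fun i hi => by rw [hA i hi]),
          Finset.sum_const, nsmul_eq_mul, hcardA]
      · rw [Finset.sum_congr rfl
            (fun i hi => by rw [hBCval i (Finset.mem_union_left _ hi)]),
          Finset.sum_const, nsmul_eq_mul, hcardB]
        push_cast [hakN]
        ring
    · rw [Finset.sum_congr rfl
          (fun i hi => by rw [hBCval i (Finset.mem_union_right _ hi)]),
        Finset.sum_const, nsmul_eq_mul, hCcast]
  -- key algebraic inequality : k n ≤ γ (n-k)^2
  have hKey : (k : ℝ) * n ≤ γ * ((n : ℝ) - k) ^ 2 := by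
    nlinarith [sq_nonneg ((n : ℝ) * (γ + 1) - ((n : ℝ) - k) * (2 * γ + 1)),
      sq_nonneg (γ * (n : ℝ) - (2 * γ + 1) * k), mul_pos hγ0 hK]
  have h2 : ∑ i : Fin n, ‖xh i‖ ^ 2
      ≤ 5 * γ / k * (((n : ℝ) - k) * v) ^ 2 := by
    rw [hsum, ha]
    have hKne : (k : ℝ) ≠ 0 := hK.ne'
    have hcoeff : (k : ℝ) * ((n : ℝ) - γ * k) * v ^ 2 ≤ γ * (((n : ℝ) - k) * v) ^ 2 := by
      have h1 : (k : ℝ) * ((n : ℝ) - γ * k) ≤ γ * ((n : ℝ) - k) ^ 2 := by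
        nlinarith [mul_nonneg hγ0.le (sq_nonneg (k : ℝ))]
      nlinarith [mul_le_mul_of_nonneg_right h1 (sq_nonneg v)]
    have e1 : γ * k * (2 / k * (((n : ℝ) - k) * v)) ^ 2
        = 4 * γ * (((n : ℝ) - k) * v) ^ 2 / k := by
      field_simp; ring
    have e2 : 5 * γ / k * (((n : ℝ) - k) * v) ^ 2
        = 5 * γ * (((n : ℝ) - k) * v) ^ 2 / k := by ring
    rw [e1, e2, div_add' _ _ _ hKne, div_add' _ _ _ hKne, div_le_div_iff₀ hK hK]
    nlinarith [mul_le_mul_of_nonneg_left hcoeff hK.le]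
  refine ⟨htail, h2, ?_, ?_⟩
  · apply mul_le_mul_of_nonneg_right _ (sq_nonneg _)
    rw [div_le_div_iff₀ hK hK]
    nlinarith
  · rw [htail]
    have h3 : ∑ i : Fin n, ‖xh i‖ ^ 2 ≤ 1 / k * (((n : ℝ) - k) * v) ^ 2 := by
      calc ∑ i : Fin n, ‖xh i‖ ^ 2 ≤ 5 * γ / k * (((n : ℝ) - k) * v) ^ 2 := h2
        _ ≤ 1 / k * (((n : ℝ) - k) * v) ^ 2 := by
            apply mul_le_mul_of_nonneg_right _ (sq_nonneg _)
            rw [div_le_div_iff₀ hK hK]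
            nlinarith
    calc Real.sqrt (∑ i : Fin n, ‖xh i‖ ^ 2)
        ≤ Real.sqrt (1 / k * (((n : ℝ) - k) * v) ^ 2) := Real.sqrt_le_sqrt h3
      _ = 1 / Real.sqrt k * (((n : ℝ) - k) * v) := by
          rw [Real.sqrt_mul (by positivity), Real.sqrt_sq hMnn, one_div, one_div,
            Real.sqrt_inv]
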